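/- In the setting of the quaternion extension L_κ = M_0(α_3) with α_3^2 − α_3 = Y^3 + κ, the extended automorphisms satisfy σ_1(σ_2(α_3)) = α_3 + Y + s and σ_2(σ_1(α_3)) = α_3 + Y + s^2; in particular σ_1 σ_2 ≠ σ_2 σ_1, so Gal(L_κ/K) is nonabelian of order 8. -/
import Mathlib


noncomputable section

abbrev F4 := GaloisField 2 2

abbrev Kfield := LaurentSeries F4

/-- The uniformizer `u` of `K = F₄((u))`. -/
def uK : Kfield := HahnSeries.ofPowerSeries ℤ F4 PowerSeries.X

open scoped IntermediateField

set_option maxHeartbeats 1000000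
set_option synthInstance.maxHeartbeats 400000

/-- in `L_κ = M₀(α₃)` with `α₃² − α₃ = Y³ + κ`, the automorphisms `σ₁, σ₂`
(extending `Y ↦ Y+s`, `Y ↦ Y+s²` with `σ₁(α₃) = α₃+s²Y+s²`, `σ₂(α₃) = α₃+sY+s`)
satisfy `σ₁(σ₂(α₃)) = α₃+Y+s` and `σ₂(σ₁(α₃)) = α₃+Y+s²`; in particular
`σ₁σ₂ ≠ σ₂σ₁`, so `Gal(L_κ/K)` is nonabelian of order 8. -/
theorem quaternion_noncommuting (s : Kfield) (hs : s ^ 2 + s + 1 = 0)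
    (L : Type) [Field L] [Algebra Kfield L] (Y α₃ : L) (κ : Kfield)
    (hY : Y ^ 4 + Y = (algebraMap Kfield L uK)⁻¹)
    (hα : α₃ ^ 2 - α₃ = Y ^ 3 + algebraMap Kfield L κ)
    (hgen : IntermediateField.adjoin Kfield {Y, α₃} = ⊤)
    (σ₁ σ₂ : L ≃ₐ[Kfield] L)
    (hσ₁Y : σ₁ Y = Y + algebraMap Kfield L s)
    (hσ₁α : σ₁ α₃ = α₃ + (algebraMap Kfield L s) ^ 2 * Y + (algebraMap Kfield L s) ^ 2)
    (hσ₂Y : σ₂ Y = Y + (algebraMap Kfield L s) ^ 2)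
    (hσ₂α : σ₂ α₃ = α₃ + algebraMap Kfield L s * Y + algebraMap Kfield L s) :
    σ₁ (σ₂ α₃) = α₃ + Y + algebraMap Kfield L s ∧
    σ₂ (σ₁ α₃) = α₃ + Y + (algebraMap Kfield L s) ^ 2 ∧
    σ₁ * σ₂ ≠ σ₂ * σ₁ ∧
    Nat.card (L ≃ₐ[Kfield] L) = 8 := by
  classical
  haveI : IsScalarTower Kfield Kfield L := @IsScalarTower.left Kfield L _ _
  -- characteristic 2
  haveI hK2 : CharP Kfield 2 :=
    charP_of_injective_ringHom (f := (HahnSeries.C : F4 →+* Kfield)) HahnSeries.C_injective 2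
  haveI hL2 : CharP L 2 :=
    charP_of_injective_ringHom (algebraMap Kfield L).injective 2
  have h2 : (2 : L) = 0 := by
    have := CharP.cast_eq_zero L 2
    simpa using this
  set a : L := algebraMap Kfield L s with ha_def
  have ha : a ^ 2 + a + 1 = 0 := by
    have := congrArg (algebraMap Kfield L) hs
    simpa [map_add, map_pow, map_one] using this
  have h10 : (1 : L) ≠ 0 := one_ne_zero
  have ha0 : a ≠ 0 := fun h => h10 (by linear_combination ha - (a + 1) * h)
  have ha1 : a ≠ 1 := fun h => h10 (by linear_combination ha - (a + 2) * h - h2)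
  have haa : a ≠ a ^ 2 := fun h => h10 (by linear_combination ha + h - a * h2)
  have ha20 : a ^ 2 ≠ 0 := pow_ne_zero 2 ha0
  have ha21 : a ^ 2 ≠ 1 := fun h => h10 (by linear_combination (2 - a) * ha + (a - 1) * h - h2)
  have hc1 : σ₁ a = a := σ₁.commutes s
  have hc2 : σ₂ a = a := σ₂.commutes s
  -- the two key composite values
  have H12 : σ₁ (σ₂ α₃) = α₃ + Y + a := by
    simp only [hσ₂α, map_add, map_mul, map_pow, hσ₁α, hσ₁Y, hc1]
    linear_combination Y * ha + (a ^ 2 - Y) * h2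
  have H21 : σ₂ (σ₁ α₃) = α₃ + Y + a ^ 2 := by
    simp only [hσ₁α, map_add, map_mul, map_pow, hσ₂α, hσ₂Y, hc2]
    linear_combination (Y + a ^ 2 - a) * ha + (a - Y) * h2
  -- action lemmas for the eight automorphisms
  have A0Y : (1 : L ≃ₐ[Kfield] L) Y = Y := rfl
  have A0a : (1 : L ≃ₐ[Kfield] L) α₃ = α₃ := rfl
  have A1Y : (σ₁ * σ₁) Y = Y := by
    simp only [AlgEquiv.mul_apply, hσ₁Y, hσ₁α, map_add, map_mul, map_pow, hc1]
    linear_combination a * h2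
  have A1a : (σ₁ * σ₁) α₃ = α₃ + 1 := by
    simp only [AlgEquiv.mul_apply, hσ₁Y, hσ₁α, map_add, map_mul, map_pow, hc1]
    linear_combination (a - 1) * ha + (a ^ 2 * Y + a ^ 2) * h2
  have A2Y : σ₁ Y = Y + a := hσ₁Y
  have A3Y : (σ₁ * σ₁ * σ₁) Y = Y + a := by
    simp only [AlgEquiv.mul_apply, hσ₁Y, hσ₁α, map_add, map_mul, map_pow, hc1]
    linear_combination a * h2
  have A3a : (σ₁ * σ₁ * σ₁) α₃ = α₃ + a ^ 2 * Y + a ^ 2 + 1 := by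
    simp only [AlgEquiv.mul_apply, hσ₁Y, hσ₁α, map_add, map_mul, map_pow, hc1]
    linear_combination (a - 1) * ha + (a ^ 2 * Y + a ^ 2 + a ^ 3) * h2
  have A4Y : σ₂ Y = Y + a ^ 2 := hσ₂Y
  have A5Y : (σ₂ * (σ₁ * σ₁)) Y = Y + a ^ 2 := by
    simp only [AlgEquiv.mul_apply, hσ₁Y, hσ₁α, hσ₂Y, hσ₂α, map_add, map_mul, map_pow, hc1, hc2]
    linear_combination a * h2
  have A5a : (σ₂ * (σ₁ * σ₁)) α₃ = α₃ + a * Y + a + 1 := by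
    simp only [AlgEquiv.mul_apply, hσ₁Y, hσ₁α, hσ₂Y, hσ₂α, map_add, map_mul, map_pow, hc1, hc2]
    linear_combination (a - 1) * ha + (a ^ 2 * Y + a ^ 4 + a ^ 2) * h2
  have A6Y : (σ₁ * σ₂) Y = Y + 1 := by
    simp only [AlgEquiv.mul_apply, hσ₁Y, hσ₂Y, map_add, map_mul, map_pow, hc1]
    linear_combination ha - h2
  have A6a : (σ₁ * σ₂) α₃ = α₃ + Y + a := by
    simp only [AlgEquiv.mul_apply]; exact H12
  have A7Y : (σ₂ * σ₁) Y = Y + 1 := by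
    simp only [AlgEquiv.mul_apply, hσ₁Y, hσ₂Y, map_add, map_mul, map_pow, hc2]
    linear_combination ha - h2
  have A7a : (σ₂ * σ₁) α₃ = α₃ + Y + a ^ 2 := by
    simp only [AlgEquiv.mul_apply]; exact H21
  -- inequalities between images
  have hY01 : Y ≠ Y + a := fun h => ha0 (by linear_combination -h)
  have hY02 : Y ≠ Y + a ^ 2 := fun h => ha20 (by linear_combination -h)
  have hY03 : Y ≠ Y + 1 := fun h => h10 (by linear_combination -h)
  have hY12 : Y + a ≠ Y + a ^ 2 := fun h => haa (by linear_combination h)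
  have hY13 : Y + a ≠ Y + 1 := fun h => ha1 (by linear_combination h)
  have hY23 : Y + a ^ 2 ≠ Y + 1 := fun h => ha21 (by linear_combination h)
  have hA01 : α₃ ≠ α₃ + 1 := fun h => h10 (by linear_combination -h)
  have hA23 : α₃ + a ^ 2 * Y + a ^ 2 ≠ α₃ + a ^ 2 * Y + a ^ 2 + 1 :=
    fun h => h10 (by linear_combination -h)
  have hA45 : α₃ + a * Y + a ≠ α₃ + a * Y + a + 1 := fun h => h10 (by linear_combination -h)
  have hA67 : α₃ + Y + a ≠ α₃ + Y + a ^ 2 := fun h => haa (by linear_combination h)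
  have neY : ∀ {g h : L ≃ₐ[Kfield] L}, g Y ≠ h Y → g ≠ h := fun hne he => hne (by rw [he])
  have neA : ∀ {g h : L ≃ₐ[Kfield] L}, g α₃ ≠ h α₃ → g ≠ h := fun hne he => hne (by rw [he])
  -- finite dimensionality and the degree bound [L : K] ≤ 8
  have hYroot : (Polynomial.aeval Y)
      (Polynomial.X ^ 4 + Polynomial.X - Polynomial.C (uK⁻¹)) = 0 := by
    rw [map_sub (Polynomial.aeval (R := Kfield) (A := L) Y)
        (Polynomial.X ^ 4 + Polynomial.X) (Polynomial.C (uK⁻¹)),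
      map_add (Polynomial.aeval (R := Kfield) (A := L) Y),
      map_pow (Polynomial.aeval (R := Kfield) (A := L) Y),
      Polynomial.aeval_X, Polynomial.aeval_C, hY, map_inv₀, sub_self]
  have hmon : (Polynomial.X ^ 4 + Polynomial.X - Polynomial.C (uK⁻¹) : Polynomial Kfield).Monic := by
    have heq : (Polynomial.X ^ 4 + Polynomial.X - Polynomial.C (uK⁻¹) : Polynomial Kfield)
        = Polynomial.X ^ 4 + (Polynomial.X - Polynomial.C (uK⁻¹)) := by ring
    rw [heq]
    refine Polynomial.monic_X_pow_add ?_
    calc (Polynomial.X - Polynomial.C (uK⁻¹) : Polynomial Kfield).degree ≤ 1 :=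
          Polynomial.degree_X_sub_C_le _
      _ < 4 := by decide
  have hYint : IsIntegral Kfield Y := ⟨_, hmon, hYroot⟩
  haveI : FiniteDimensional Kfield Kfield⟮Y⟯ := IntermediateField.adjoin.finiteDimensional hYint
  have hfr1 : Module.finrank Kfield Kfield⟮Y⟯ ≤ 4 := by
    rw [IntermediateField.adjoin.finrank hYint]
    have hle := Polynomial.natDegree_le_natDegree (minpoly.min Kfield Y hmon hYroot)
    have hdeg : (Polynomial.X ^ 4 + Polynomial.X - Polynomial.C (uK⁻¹) :
        Polynomial Kfield).natDegree ≤ 4 := by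
      compute_degree
    omega
  set YM : Kfield⟮Y⟯ := IntermediateField.AdjoinSimple.gen Kfield Y with hYM
  have hαroot : (Polynomial.aeval α₃)
      (Polynomial.X ^ 2 - Polynomial.X -
        Polynomial.C (YM ^ 3 + algebraMap Kfield Kfield⟮Y⟯ κ)) = 0 := by
    rw [map_sub (Polynomial.aeval (R := Kfield⟮Y⟯) (A := L) α₃)
        (Polynomial.X ^ 2 - Polynomial.X) (Polynomial.C (YM ^ 3 + algebraMap Kfield Kfield⟮Y⟯ κ)),
      map_sub (Polynomial.aeval (R := Kfield⟮Y⟯) (A := L) α₃) (Polynomial.X ^ 2) Polynomial.X,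
      map_pow (Polynomial.aeval (R := Kfield⟮Y⟯) (A := L) α₃),
      Polynomial.aeval_X, Polynomial.aeval_C]
    have h1 : (algebraMap Kfield⟮Y⟯ L) (YM ^ 3 + algebraMap Kfield Kfield⟮Y⟯ κ)
        = Y ^ 3 + algebraMap Kfield L κ := by
      rw [map_add, map_pow, hYM, IntermediateField.AdjoinSimple.algebraMap_gen,
        ← IsScalarTower.algebraMap_apply]
    rw [h1, ← hα, sub_self]
  have hmon2 : (Polynomial.X ^ 2 - Polynomial.X -
      Polynomial.C (YM ^ 3 + algebraMap Kfield Kfield⟮Y⟯ κ) : Polynomial Kfield⟮Y⟯).Monic := by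
    have heq : (Polynomial.X ^ 2 - Polynomial.X -
        Polynomial.C (YM ^ 3 + algebraMap Kfield Kfield⟮Y⟯ κ) : Polynomial Kfield⟮Y⟯)
        = Polynomial.X ^ 2 +
          (-(Polynomial.X + Polynomial.C (YM ^ 3 + algebraMap Kfield Kfield⟮Y⟯ κ))) := by ring
    rw [heq]
    refine Polynomial.monic_X_pow_add ?_
    rw [Polynomial.degree_neg]
    calc (Polynomial.X + Polynomial.C (YM ^ 3 + algebraMap Kfield Kfield⟮Y⟯ κ) :
          Polynomial Kfield⟮Y⟯).degree ≤ 1 := (Polynomial.degree_X_add_C _).le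
      _ < 2 := by decide
  have hαint : IsIntegral Kfield⟮Y⟯ α₃ := ⟨_, hmon2, hαroot⟩
  have htop : IntermediateField.adjoin Kfield⟮Y⟯ {α₃} = ⊤ := by
    apply IntermediateField.restrictScalars_injective Kfield
    rw [IntermediateField.adjoin_adjoin_left, Set.singleton_union, hgen,
      IntermediateField.restrictScalars_top]
  haveI : FiniteDimensional Kfield⟮Y⟯ L := by
    haveI hfd := IntermediateField.adjoin.finiteDimensional hαint
    rw [htop] at hfd
    exact (IntermediateField.topEquiv (F := Kfield⟮Y⟯) (E := L)).toLinearEquiv.finiteDimensional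
  have hfr2 : Module.finrank Kfield⟮Y⟯ L ≤ 2 := by
    have h' : Module.finrank Kfield⟮Y⟯ (IntermediateField.adjoin Kfield⟮Y⟯ {α₃}) ≤ 2 := by
      rw [IntermediateField.adjoin.finrank hαint]
      have hle := Polynomial.natDegree_le_natDegree (minpoly.min Kfield⟮Y⟯ α₃ hmon2 hαroot)
      have hdeg : (Polynomial.X ^ 2 - Polynomial.X -
          Polynomial.C (YM ^ 3 + algebraMap Kfield Kfield⟮Y⟯ κ) :
          Polynomial Kfield⟮Y⟯).natDegree ≤ 2 := by
        compute_degree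
      omega
    rw [htop, IntermediateField.finrank_top'] at h'
    exact h'
  haveI : FiniteDimensional Kfield L := FiniteDimensional.trans Kfield Kfield⟮Y⟯ L
  have hfr : Module.finrank Kfield L ≤ 8 := by
    rw [← Module.finrank_mul_finrank Kfield Kfield⟮Y⟯ L]
    calc Module.finrank Kfield Kfield⟮Y⟯ * Module.finrank Kfield⟮Y⟯ L ≤ 4 * 2 :=
          Nat.mul_le_mul hfr1 hfr2
      _ = 8 := rfl
  -- upper bound for the number of automorphisms
  have hcard_le : Fintype.card (L ≃ₐ[Kfield] L) ≤ 8 := by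
    have hinj : Function.Injective (fun e : L ≃ₐ[Kfield] L => (e : L →ₐ[Kfield] L)) := by
      intro e f h
      ext x
      exact DFunLike.congr_fun h x
    have h1 : Fintype.card (L ≃ₐ[Kfield] L) ≤ Fintype.card (L →ₐ[Kfield] L) :=
      Fintype.card_le_of_injective _ hinj
    have h2 := finrank_algHom Kfield L
    rw [Module.finrank_linearMap_self] at h2
    omega
  -- lower bound: eight distinct automorphisms
  have hnd : ([1, σ₁ * σ₁, σ₁, σ₁ * σ₁ * σ₁, σ₂, σ₂ * (σ₁ * σ₁), σ₁ * σ₂, σ₂ * σ₁] :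
      List (L ≃ₐ[Kfield] L)).Nodup := by
    simp only [List.nodup_cons, List.mem_cons, List.not_mem_nil, or_false, List.nodup_nil,
      and_true, not_or]
    repeat' apply And.intro
    · exact neA (by rw [A0a, A1a]; exact hA01)
    · exact neY (by rw [A0Y, A2Y]; exact hY01)
    · exact neY (by rw [A0Y, A3Y]; exact hY01)
    · exact neY (by rw [A0Y, A4Y]; exact hY02)
    · exact neY (by rw [A0Y, A5Y]; exact hY02)
    · exact neY (by rw [A0Y, A6Y]; exact hY03)
    · exact neY (by rw [A0Y, A7Y]; exact hY03)
    · exact neY (by rw [A1Y, A2Y]; exact hY01)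
    · exact neY (by rw [A1Y, A3Y]; exact hY01)
    · exact neY (by rw [A1Y, A4Y]; exact hY02)
    · exact neY (by rw [A1Y, A5Y]; exact hY02)
    · exact neY (by rw [A1Y, A6Y]; exact hY03)
    · exact neY (by rw [A1Y, A7Y]; exact hY03)
    · exact neA (by rw [hσ₁α, A3a]; exact hA23)
    · exact neY (by rw [A2Y, A4Y]; exact hY12)
    · exact neY (by rw [A2Y, A5Y]; exact hY12)
    · exact neY (by rw [A2Y, A6Y]; exact hY13)
    · exact neY (by rw [A2Y, A7Y]; exact hY13)
    · exact neY (by rw [A3Y, A4Y]; exact hY12)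
    · exact neY (by rw [A3Y, A5Y]; exact hY12)
    · exact neY (by rw [A3Y, A6Y]; exact hY13)
    · exact neY (by rw [A3Y, A7Y]; exact hY13)
    · exact neA (by rw [hσ₂α, A5a]; exact hA45)
    · exact neY (by rw [A4Y, A6Y]; exact hY23)
    · exact neY (by rw [A4Y, A7Y]; exact hY23)
    · exact neY (by rw [A5Y, A6Y]; exact hY23)
    · exact neY (by rw [A5Y, A7Y]; exact hY23)
    · exact neA (by rw [A6a, A7a]; exact hA67)
    · exact not_false
  have hlen := hnd.length_le_card
  simp only [List.length_cons, List.length_nil] at hlen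
  refine ⟨H12, H21, ?_, ?_⟩
  · intro h
    have := congrArg (fun g : L ≃ₐ[Kfield] L => g α₃) h
    simp only [AlgEquiv.mul_apply] at this
    rw [H12, H21] at this
    exact hA67 this
  · rw [Nat.card_eq_fintype_card]
    omega
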